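/- arXiv:2411.09697 — 3 statements merged into one kernel-verified Lean document; each statement's English description precedes it below -/
import Mathlib

section
/- Let G be a group, g₀ ∈ G, Z the centralizer of g₀, C the conjugacy class of g₀, τ : C → G a section with τ(c) g₀ τ(c)⁻¹ = c, V a complex vector space, ρ : Z →* (V →ₗ[ℂ] V)ˣ a representation, and π the associated homomorphism on functions C → V given by (π(g) f)(c) := ρ(τ(c)⁻¹ g τ(g⁻¹ c g)) (f (g⁻¹ c g)). For h ∈ G let P_h be the linear operator on functions C → V given by (P_h f)(c) := (if (c : G) = h then f c else 0), and set act(h, g) := P_h ∘ π(g). Then for all h₁, h₂, g₁, g₂: act(h₁, g₁) ∘ act(h₂, g₂) = (if h₁ = g₁ h₂ g₁⁻¹ then 1 else 0) • act(h₁, g₁ g₂). (Thus the action of the basis elements δ_h g respects the Drinfeld double multiplication (δ_{h₁} g₁)(δ_{h₂} g₂) = δ_{h₁, g₁ h₂ g₁⁻¹} δ_{h₁} g₁g₂.) -/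
/-! The factor `τ(c)⁻¹ g τ(g⁻¹ c g)` is a cocycle for the right conjugation action on `C`
(the middle `τ`'s telescope), so `π` is multiplicative, and `π(g)` carries the fibre over `h`
to the fibre over `g h g⁻¹`, i.e. `π(g) P_h = P_{g h g⁻¹} π(g)`. Hence
`P_{h₁} π(g₁) P_{h₂} π(g₂) = P_{h₁} P_{g₁ h₂ g₁⁻¹} π(g₁ g₂)`, and the two projections
compose to `[h₁ = g₁ h₂ g₁⁻¹] P_{h₁}`. -/

variable {G : Type*} [Group G]

/-- The conjugacy class `{x g₀ x⁻¹ : x ∈ G}` of `g₀`. -/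
def conjClass (g₀ : G) : Set G := {x | ∃ g : G, g * g₀ * g⁻¹ = x}

/-- The conjugacy class is closed under conjugation. -/
lemma conj_mem_conjClass (g₀ g : G) (c : conjClass g₀) :
    g⁻¹ * (c : G) * g ∈ conjClass g₀ := by
  obtain ⟨x, hx⟩ := c.2
  refine ⟨g⁻¹ * x, ?_⟩
  rw [← hx]; group

/-- `τ(c)⁻¹ g τ(g⁻¹ c g)` lies in the centralizer of `g₀`. -/
lemma section_conj_mem_centralizer (g₀ : G) (τ : conjClass g₀ → G)
    (hτ : ∀ c : conjClass g₀, τ c * g₀ * (τ c)⁻¹ = (c : G)) (g : G) (c : conjClass g₀) :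
    (τ c)⁻¹ * g * τ ⟨g⁻¹ * (c : G) * g, conj_mem_conjClass g₀ g c⟩
      ∈ Subgroup.centralizer ({g₀} : Set G) := by
  rw [Subgroup.mem_centralizer_iff]
  intro h hh
  rw [Set.mem_singleton_iff] at hh
  rw [hh]
  set A := τ c with hAdef
  set B := τ ⟨g⁻¹ * (c : G) * g, conj_mem_conjClass g₀ g c⟩ with hBdef
  have hA : A * g₀ * A⁻¹ = (c : G) := hτ c
  have hB : B * g₀ * B⁻¹ = g⁻¹ * (c : G) * g := hτ _
  have h2 : B * g₀ = g⁻¹ * (c : G) * g * B := by rw [← hB]; group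
  have key : A * (g₀ * (A⁻¹ * g * B)) = A * (A⁻¹ * g * B * g₀) := by
    calc A * (g₀ * (A⁻¹ * g * B)) = (A * g₀ * A⁻¹) * g * B := by group
    _ = (c : G) * g * B := by rw [hA]
    _ = g * (g⁻¹ * (c : G) * g * B) := by group
    _ = g * (B * g₀) := by rw [← h2]
    _ = A * (A⁻¹ * g * B * g₀) := by group
  exact mul_left_cancel key

/-- The Drinfeld-double representation of `G` on functions `C → V`, given a
representation `ρ` of the centralizer `Z` of `g₀` on `V`:
`(π(g) f)(c) = ρ(τ(c)⁻¹ g τ(g⁻¹ c g)) (f (g⁻¹ c g))`. -/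
def piRep {V : Type*} [AddCommGroup V] [Module ℂ V] (g₀ : G)
    (τ : conjClass g₀ → G)
    (hτ : ∀ c : conjClass g₀, τ c * g₀ * (τ c)⁻¹ = (c : G))
    (ρ : Subgroup.centralizer ({g₀} : Set G) →* (V →ₗ[ℂ] V)ˣ) (g : G) :
    (conjClass g₀ → V) →ₗ[ℂ] (conjClass g₀ → V) where
  toFun f := fun c =>
    (ρ ⟨(τ c)⁻¹ * g * τ ⟨g⁻¹ * (c : G) * g, conj_mem_conjClass g₀ g c⟩,
        section_conj_mem_centralizer g₀ τ hτ g c⟩ : V →ₗ[ℂ] V)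
      (f ⟨g⁻¹ * (c : G) * g, conj_mem_conjClass g₀ g c⟩)
  map_add' f₁ f₂ := by funext c; simp
  map_smul' a f := by funext c; simp

/-- The projection `P_h` onto the fiber where the class element equals `h`:
`(P_h f)(c) = [c = h] f(c)`. -/
def Pmap [DecidableEq G] {V : Type*} [AddCommGroup V] [Module ℂ V] (g₀ : G) (h : G) :
    (conjClass g₀ → V) →ₗ[ℂ] (conjClass g₀ → V) where
  toFun f := fun c => if (c : G) = h then f c else 0
  map_add' f₁ f₂ := by
    funext c
    by_cases hc : (c : G) = h <;> simp [hc]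
  map_smul' a f := by
    funext c
    by_cases hc : (c : G) = h <;> simp [hc]

/-- The action `act(h, g) = P_h ∘ π(g)` of the Drinfeld double basis element
`δ_h g` on functions `C → V`. -/
def act [DecidableEq G] {V : Type*} [AddCommGroup V] [Module ℂ V] (g₀ : G)
    (τ : conjClass g₀ → G)
    (hτ : ∀ c : conjClass g₀, τ c * g₀ * (τ c)⁻¹ = (c : G))
    (ρ : Subgroup.centralizer ({g₀} : Set G) →* (V →ₗ[ℂ] V)ˣ) (h g : G) :
    (conjClass g₀ → V) →ₗ[ℂ] (conjClass g₀ → V) :=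
  Pmap g₀ h ∘ₗ piRep g₀ τ hτ ρ g

section DrinfeldDouble

variable {V : Type*} [AddCommGroup V] [Module ℂ V] (g₀ : G)

def conjClassConj (g : G) (c : conjClass g₀) : conjClass g₀ :=
  ⟨g⁻¹ * (c : G) * g, conj_mem_conjClass g₀ g c⟩

lemma conjClassConj_mul (g₁ g₂ : G) (c : conjClass g₀) :
    conjClassConj g₀ (g₁ * g₂) c = conjClassConj g₀ g₂ (conjClassConj g₀ g₁ c) :=
  Subtype.ext (by simp only [conjClassConj]; group)

lemma conjClassConj_eq_iff (g h : G) (c : conjClass g₀) :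
    (conjClassConj g₀ g c : G) = h ↔ (c : G) = g * h * g⁻¹ := by
  simp only [conjClassConj]
  constructor
  · rintro rfl; group
  · intro hc; rw [hc]; group

variable (τ : conjClass g₀ → G) (hτ : ∀ c : conjClass g₀, τ c * g₀ * (τ c)⁻¹ = (c : G))

def sectionCocycle (g : G) (c : conjClass g₀) : Subgroup.centralizer ({g₀} : Set G) :=
  ⟨(τ c)⁻¹ * g * τ (conjClassConj g₀ g c), section_conj_mem_centralizer g₀ τ hτ g c⟩

lemma sectionCocycle_mul (g₁ g₂ : G) (c : conjClass g₀) :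
    sectionCocycle g₀ τ hτ (g₁ * g₂) c
      = sectionCocycle g₀ τ hτ g₁ c * sectionCocycle g₀ τ hτ g₂ (conjClassConj g₀ g₁ c) := by
  apply Subtype.ext
  simp only [sectionCocycle, Subgroup.coe_mul, conjClassConj_mul]
  group

variable (ρ : Subgroup.centralizer ({g₀} : Set G) →* (V →ₗ[ℂ] V)ˣ)

lemma piRep_apply (g : G) (f : conjClass g₀ → V) (c : conjClass g₀) :
    piRep g₀ τ hτ ρ g f c
      = (ρ (sectionCocycle g₀ τ hτ g c) : V →ₗ[ℂ] V) (f (conjClassConj g₀ g c)) :=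
  rfl

lemma piRep_mul (g₁ g₂ : G) :
    piRep g₀ τ hτ ρ (g₁ * g₂) = piRep g₀ τ hτ ρ g₁ ∘ₗ piRep g₀ τ hτ ρ g₂ := by
  ext f c
  simp only [LinearMap.comp_apply, piRep_apply, conjClassConj_mul, sectionCocycle_mul, map_mul,
    Units.val_mul, Module.End.mul_apply]

variable [DecidableEq G]

lemma Pmap_apply (h : G) (f : conjClass g₀ → V) (c : conjClass g₀) :
    Pmap g₀ h f c = if (c : G) = h then f c else 0 :=
  rfl

lemma Pmap_comp_Pmap (h₁ h₂ : G) :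
    (Pmap g₀ h₁ ∘ₗ Pmap g₀ h₂ : (conjClass g₀ → V) →ₗ[ℂ] _)
      = (if h₁ = h₂ then (1 : ℂ) else 0) • Pmap g₀ h₁ := by
  ext f c
  simp only [LinearMap.comp_apply, LinearMap.smul_apply, Pi.smul_apply, Pmap_apply]
  split_ifs <;> simp_all

lemma piRep_comp_Pmap (g h : G) :
    piRep g₀ τ hτ ρ g ∘ₗ Pmap g₀ h = Pmap g₀ (g * h * g⁻¹) ∘ₗ piRep g₀ τ hτ ρ g := by
  ext f c
  simp only [LinearMap.comp_apply, piRep_apply, Pmap_apply, conjClassConj_eq_iff]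
  split_ifs <;> simp

end DrinfeldDouble

/-- The action of the basis elements `δ_h g` respects the Drinfeld double
multiplication: `act(h₁,g₁) ∘ act(h₂,g₂) = [h₁ = g₁ h₂ g₁⁻¹] • act(h₁, g₁g₂)`. -/
theorem act_respects_drinfeld_double_mul [DecidableEq G]
    {V : Type*} [AddCommGroup V] [Module ℂ V] (g₀ : G)
    (τ : conjClass g₀ → G)
    (hτ : ∀ c : conjClass g₀, τ c * g₀ * (τ c)⁻¹ = (c : G))
    (ρ : Subgroup.centralizer ({g₀} : Set G) →* (V →ₗ[ℂ] V)ˣ) :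
    ∀ h₁ h₂ g₁ g₂ : G,
      act g₀ τ hτ ρ h₁ g₁ ∘ₗ act g₀ τ hτ ρ h₂ g₂
        = (if h₁ = g₁ * h₂ * g₁⁻¹ then (1 : ℂ) else 0) • act g₀ τ hτ ρ h₁ (g₁ * g₂) := by
  intro h₁ h₂ g₁ g₂
  calc act g₀ τ hτ ρ h₁ g₁ ∘ₗ act g₀ τ hτ ρ h₂ g₂
      = Pmap g₀ h₁ ∘ₗ (piRep g₀ τ hτ ρ g₁ ∘ₗ Pmap g₀ h₂) ∘ₗ piRep g₀ τ hτ ρ g₂ := rfl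
    _ = (Pmap g₀ h₁ ∘ₗ Pmap g₀ (g₁ * h₂ * g₁⁻¹)) ∘ₗ piRep g₀ τ hτ ρ (g₁ * g₂) := by
      rw [piRep_comp_Pmap, piRep_mul]; rfl
    _ = _ := by rw [Pmap_comp_Pmap, LinearMap.smul_comp]; rfl
end

section
/- Fix n ≥ 1 and work in the ZMod 2-module W of functions Fin n × Fin n → ZMod 2, with B_i the indicator of block i, 𝟙 the all-ones vector, H_X the span of the adjacent double-block vectors {B_i + B_{i+1}}, and H_Z the span of the within-block adjacent-pair vectors {δ_{(i,j)} + δ_{(i,j+1)}}. Then: (i) H_X is orthogonal to H_Z, i.e. ⟨u, v⟩ = 0 for all u ∈ H_X, v ∈ H_Z (the CSS condition); (ii) the orthogonal complement of H_Z in W is exactly the set of block-constant vectors; (iii) if n is odd, then 𝟙 ∉ H_X, and every block-constant vector lies in H_X ∪ (𝟙 + H_X), so the quotient of the orthogonal complement of H_Z by H_X has exactly two elements (the generalized Shor code encodes one logical qubit). -/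
/-- The indicator vector `B_i` of block `i` among qubits indexed by
`Fin n × Fin n`. -/
def Blk (n : ℕ) (i : Fin n) : Fin n × Fin n → ZMod 2 := fun p => if p.1 = i then 1 else 0

/-- The all-ones vector `𝟙 = ∑ i, B_i`. -/
def allOnes (n : ℕ) : Fin n × Fin n → ZMod 2 := ∑ i : Fin n, Blk n i

/-- `H_X`, the span of the adjacent double-block vectors `B_i + B_{i+1}`. -/
def HX (n : ℕ) : Submodule (ZMod 2) (Fin n × Fin n → ZMod 2) :=
  Submodule.span (ZMod 2)
    {w | ∃ (i : Fin n) (hi : (i : ℕ) + 1 < n), w = Blk n i + Blk n ⟨(i : ℕ) + 1, hi⟩}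

/-- `H_Z`, the span of the within-block adjacent-pair vectors
`δ_{(i,j)} + δ_{(i,j+1)}`. -/
def HZ (n : ℕ) : Submodule (ZMod 2) (Fin n × Fin n → ZMod 2) :=
  Submodule.span (ZMod 2)
    {w | ∃ (i j : Fin n) (hj : (j : ℕ) + 1 < n),
      w = Pi.single (i, j) 1 + Pi.single (i, ⟨(j : ℕ) + 1, hj⟩) 1}

/-- The bilinear form `⟨u, v⟩ = ∑ p, u(p) v(p)` over `ZMod 2`. -/
def ip (n : ℕ) (u v : Fin n × Fin n → ZMod 2) : ZMod 2 := ∑ p : Fin n × Fin n, u p * v p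

/-- `v` is block-constant if `v(i,j) = v(i,j')` for all `i, j, j'`. -/
def blockConstant (n : ℕ) (v : Fin n × Fin n → ZMod 2) : Prop :=
  ∀ i j j' : Fin n, v (i, j) = v (i, j')

/-- The orthogonal complement of `H_Z` with respect to `⟨·,·⟩`, as a submodule. -/
def HZperp (n : ℕ) : Submodule (ZMod 2) (Fin n × Fin n → ZMod 2) where
  carrier := {v | ∀ u ∈ HZ n, ip n u v = 0}
  add_mem' := by
    intro a b ha hb u hu
    have h : ip n u (a + b) = ip n u a + ip n u b := by
      unfold ip
      rw [← Finset.sum_add_distrib]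
      exact Finset.sum_congr rfl fun p _ => by simp [mul_add]
    rw [h, ha u hu, hb u hu, add_zero]
  zero_mem' := by
    intro u hu
    unfold ip
    simp
  smul_mem' := by
    intro cc v hv u hu
    have h : ip n u (cc • v) = cc * ip n u v := by
      unfold ip
      rw [Finset.mul_sum]
      refine Finset.sum_congr rfl fun p _ => ?_
      simp only [Pi.smul_apply, smul_eq_mul]
      ring
    rw [h, hv u hu, mul_zero]

/-! Pairing `v` with the generator `δ_{(i,j)} + δ_{(i,j+1)}` of `H_Z` gives `v(i,j) + v(i,j+1)`,
so `H_Z^⟂` consists of the block-constant vectors `∑ i, c i • B_i`. Modulo `H_X` all the `B_i`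
coincide, so such a vector lies in `H_X` exactly when its block parity `∑ i, c i` vanishes:
`H_X` is the kernel of the block parity on `H_Z^⟂`. For odd `n` the parity of `𝟙` is `n = 1`,
so the block parity identifies `H_Z^⟂ / H_X` with `ZMod 2`. -/

theorem Fin.apply_eq_apply_of_adjacent_eq {α : Type*} {n : ℕ} {f : Fin n → α}
    (h : ∀ (k : ℕ) (hk : k + 1 < n), f ⟨k, by omega⟩ = f ⟨k + 1, hk⟩) (i j : Fin n) :
    f i = f j := by
  have h0 : ∀ (k : ℕ) (hk : k < n), f ⟨k, hk⟩ = f ⟨0, by omega⟩ := by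
    intro k hk
    induction k with
    | zero => rfl
    | succ k ih => rw [← h k hk, ih]
  rw [h0 i i.isLt, h0 j j.isLt]

theorem sum_smul_mem_span_adjacent_sub {R M : Type*} [Ring R] [AddCommGroup M] [Module R M]
    {n : ℕ} (b : Fin n → M) {c : Fin n → R} (hc : ∑ i, c i = 0) :
    ∑ i, c i • b i ∈
      Submodule.span R {w | ∃ (i : Fin n) (hi : (i : ℕ) + 1 < n), w = b i - b ⟨i + 1, hi⟩} := by
  set S := Submodule.span R {w | ∃ (i : Fin n) (hi : (i : ℕ) + 1 < n), w = b i - b ⟨i + 1, hi⟩}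
  have hb : ∀ i j, S.mkQ (b i) = S.mkQ (b j) :=
    Fin.apply_eq_apply_of_adjacent_eq fun k hk =>
      (Submodule.Quotient.eq S).2 (Submodule.subset_span ⟨⟨k, by omega⟩, hk, rfl⟩)
  rw [← Submodule.Quotient.mk_eq_zero, ← Submodule.mkQ_apply, map_sum]
  rcases n with _ | n
  · simp
  · simp only [map_smul, hb _ 0, ← Finset.sum_smul, hc, zero_smul]

section ShorCode

variable {n : ℕ}

theorem ip_eq_dotProduct (u v : Fin n × Fin n → ZMod 2) : ip n u v = u ⬝ᵥ v := rfl

theorem ip_comm (u v : Fin n × Fin n → ZMod 2) : ip n u v = ip n v u :=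
  dotProduct_comm u v

theorem ip_single_add_single (p q : Fin n × Fin n) (v : Fin n × Fin n → ZMod 2) :
    ip n (Pi.single p 1 + Pi.single q 1) v = v p + v q := by
  simp only [ip_eq_dotProduct, add_dotProduct, single_dotProduct, one_mul]

theorem mem_HZperp_iff {v : Fin n × Fin n → ZMod 2} :
    v ∈ HZperp n ↔ ∀ (i j : Fin n) (hj : (j : ℕ) + 1 < n), v (i, j) = v (i, ⟨j + 1, hj⟩) := by
  have hgen : ∀ (i j : Fin n) (hj : (j : ℕ) + 1 < n),
      ip n (Pi.single (i, j) 1 + Pi.single (i, ⟨j + 1, hj⟩) 1) v = 0 ↔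
        v (i, j) = v (i, ⟨j + 1, hj⟩) := fun i j hj => by
    rw [ip_single_add_single, ← ZModModule.sub_eq_add, sub_eq_zero]
  change HZ n ≤ LinearMap.ker ((dotProductBilin (ZMod 2) (ZMod 2)).flip v) ↔ _
  rw [HZ, Submodule.span_le]
  refine ⟨fun h i j hj => (hgen i j hj).1 (h ⟨i, j, hj, rfl⟩), ?_⟩
  rintro h _ ⟨i, j, hj, rfl⟩
  exact (hgen i j hj).2 (h i j hj)

theorem mem_HZperp_iff_blockConstant {v : Fin n × Fin n → ZMod 2} :
    v ∈ HZperp n ↔ blockConstant n v := by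
  rw [mem_HZperp_iff]
  exact ⟨fun h i => Fin.apply_eq_apply_of_adjacent_eq (f := fun j => v (i, j))
    fun k hk => h i ⟨k, by omega⟩ hk, fun h i j hj => h i _ _⟩

/-- Block `i` is read off at position `(i, i)`, so no base point of `Fin n` is needed. -/
def blockParity (n : ℕ) : (Fin n × Fin n → ZMod 2) →ₗ[ZMod 2] ZMod 2 :=
  ∑ i, LinearMap.proj (i, i)

theorem blockParity_apply (v : Fin n × Fin n → ZMod 2) : blockParity n v = ∑ i, v (i, i) := by
  simp [blockParity]

theorem blockParity_Blk (i : Fin n) : blockParity n (Blk n i) = 1 := by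
  simp [blockParity_apply, Blk]

theorem blockParity_allOnes : blockParity n (allOnes n) = n := by
  simp [allOnes, blockParity_Blk]

theorem Blk_mem_HZperp (i : Fin n) : Blk n i ∈ HZperp n :=
  mem_HZperp_iff_blockConstant.2 fun _ _ _ => rfl

theorem allOnes_mem_HZperp : allOnes n ∈ HZperp n :=
  Submodule.sum_mem _ fun i _ => Blk_mem_HZperp i

theorem eq_sum_smul_Blk_of_blockConstant {v : Fin n × Fin n → ZMod 2} (hv : blockConstant n v) :
    v = ∑ i, v (i, i) • Blk n i := by
  ext ⟨a, j⟩
  simp [Blk, hv a a j]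

theorem HX_eq_HZperp_inf_ker_blockParity : HX n = HZperp n ⊓ LinearMap.ker (blockParity n) := by
  refine le_antisymm (Submodule.span_le.2 ?_) ?_
  · rintro _ ⟨i, hi, rfl⟩
    refine ⟨add_mem (Blk_mem_HZperp _) (Blk_mem_HZperp _), ?_⟩
    rw [SetLike.mem_coe, LinearMap.mem_ker, map_add, blockParity_Blk, blockParity_Blk,
      ZModModule.add_self]
  · intro v hv
    obtain ⟨hv, hparity⟩ := Submodule.mem_inf.1 hv
    rw [LinearMap.mem_ker, blockParity_apply] at hparity
    rw [eq_sum_smul_Blk_of_blockConstant (mem_HZperp_iff_blockConstant.1 hv), HX]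
    simpa only [ZModModule.sub_eq_add] using sum_smul_mem_span_adjacent_sub (Blk n) hparity

theorem mem_HX_iff {v : Fin n × Fin n → ZMod 2} :
    v ∈ HX n ↔ v ∈ HZperp n ∧ blockParity n v = 0 := by
  rw [HX_eq_HZperp_inf_ker_blockParity, Submodule.mem_inf, LinearMap.mem_ker]

end ShorCode

theorem shor_code_css_structure_general (n : ℕ) :
    (∀ u ∈ HX n, ∀ v ∈ HZ n, ip n u v = 0) ∧
    ((HZperp n : Set (Fin n × Fin n → ZMod 2)) = {v | blockConstant n v}) ∧
    (Odd n →
      allOnes n ∉ HX n ∧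
      (∀ v : Fin n × Fin n → ZMod 2, blockConstant n v →
          v ∈ HX n ∨ ∃ y ∈ HX n, v = allOnes n + y) ∧
      Nat.card (↥(HZperp n) ⧸ Submodule.comap (HZperp n).subtype (HX n)) = 2) := by
  refine ⟨fun u hu v hv => ?_, Set.ext fun v => mem_HZperp_iff_blockConstant, fun hodd => ?_⟩
  · rw [ip_comm]
    exact (mem_HX_iff.1 hu).1 v hv
  have hparity : blockParity n (allOnes n) = 1 := by
    rw [blockParity_allOnes, hodd.natCast_zmod_two]
  refine ⟨fun h => one_ne_zero (hparity ▸ (mem_HX_iff.1 h).2), fun v hv => ?_, ?_⟩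
  · rw [← mem_HZperp_iff_blockConstant] at hv
    obtain h | h : blockParity n v = 0 ∨ blockParity n v = 1 := by
      generalize blockParity n v = c
      decide +revert
    · exact .inl (mem_HX_iff.2 ⟨hv, h⟩)
    · refine .inr ⟨v - allOnes n, mem_HX_iff.2 ⟨sub_mem hv allOnes_mem_HZperp, ?_⟩, ?_⟩
      · rw [map_sub, h, hparity, sub_self]
      · rw [add_sub_cancel]
  · set φ := blockParity n ∘ₗ (HZperp n).subtype
    have hker : Submodule.comap (HZperp n).subtype (HX n) = LinearMap.ker φ := by
      rw [HX_eq_HZperp_inf_ker_blockParity, Submodule.comap_inf, Submodule.comap_subtype_self,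
        top_inf_eq, LinearMap.ker_comp]
    have hφ : Function.Surjective φ := fun c =>
      ⟨c • ⟨allOnes n, allOnes_mem_HZperp⟩, by simp [φ, hparity]⟩
    rw [hker, Nat.card_congr (φ.quotKerEquivOfSurjective hφ).toEquiv, Nat.card_zmod]

/-- The generalized `[[n², 1, n]]` Shor code: (i) `H_X ⟂ H_Z` (the CSS
condition); (ii) the orthogonal complement of `H_Z` is exactly the set of
block-constant vectors; (iii) for odd `n`, `𝟙 ∉ H_X`, every block-constant
vector lies in `H_X ∪ (𝟙 + H_X)`, and the quotient `H_Z^⟂ / H_X` has exactly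
two elements: the code encodes one logical qubit. -/
theorem shor_code_css_structure (n : ℕ) (hn : 1 ≤ n) :
    (∀ u ∈ HX n, ∀ v ∈ HZ n, ip n u v = 0) ∧
    ((HZperp n : Set (Fin n × Fin n → ZMod 2)) = {v | blockConstant n v}) ∧
    (Odd n →
      allOnes n ∉ HX n ∧
      (∀ v : Fin n × Fin n → ZMod 2, blockConstant n v →
          v ∈ HX n ∨ ∃ y ∈ HX n, v = allOnes n + y) ∧
      Nat.card (↥(HZperp n) ⧸ Submodule.comap (HZperp n).subtype (HX n)) = 2) :=
  shor_code_css_structure_general n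
end

section
/- Let n be odd. In the free complex vector space on W := (Fin n × Fin n → ZMod 2), define for α ∈ ZMod 2 the logical qubit state |α⟩_L := ∑_{y ∈ H_X} e_{α·𝟙 + y}, where H_X is the span of the adjacent double-block vectors {B_i + B_{i+1}} and 𝟙 is the all-ones vector. Let Ĥ be a ZMod 3-linear subspace of Ŵ := (Fin n → ZMod 3) and x̂ ∈ Ŵ, and in the free complex vector space on Ŵ define for β ∈ ZMod 3 the logical qutrit state |β⟩_L := ∑_{ŷ ∈ Ĥ} e_{β·x̂ + ŷ}. Let U be the linear operator on the tensor product of these two spaces determined on basis vectors by U(e_u ⊗ e_v) := e_u ⊗ e_{v'}, where v'(j) := v(j) if the number of blocks i with u(i,j) = 1 is even, and v'(j) := -v(j) if that number is odd (the blockwise transversal controlled charge-conjugation gate). Then for all α ∈ ZMod 2 and β ∈ ZMod 3: U(|α⟩_L ⊗ |β⟩_L) = |α⟩_L ⊗ |β⟩_L if α = 0, and U(|α⟩_L ⊗ |β⟩_L) = |α⟩_L ⊗ |2·β⟩_L if α = 1. That is, U implements the logical controlled charge-conjugation gate |α⟩_L |β⟩_L ↦ |α⟩_L |(1+α)·β⟩_L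 on the code states of the [[n²,1,n]] qubit Shor code and any qutrit CSS code of length n. -/
open scoped Classical

/-- The logical two-register state `|α⟩_L ⊗ |β⟩_L`, an element of the free
complex vector space on `W × Ŵ`:
`∑_{y ∈ H_X} ∑_{ŷ ∈ Ĥ} e_{(α·𝟙 + y, β·x̂ + ŷ)}`. -/
noncomputable def logicalPair (n : ℕ) (Hhat : Submodule (ZMod 3) (Fin n → ZMod 3))
    (xhat : Fin n → ZMod 3) (α : ZMod 2) (β : ZMod 3) :
    (Fin n × Fin n → ZMod 2) × (Fin n → ZMod 3) → ℂ :=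
  ∑ y : HX n, ∑ z : Hhat,
    Pi.single (α • allOnes n + (y : Fin n × Fin n → ZMod 2), β • xhat + (z : Fin n → ZMod 3)) 1

lemma col_sum_card (n : ℕ) (u : Fin n × Fin n → ZMod 2) (j : Fin n) :
    Even (Finset.univ.filter fun i : Fin n => u (i, j) = 1).card ↔
      ∑ i : Fin n, u (i, j) = 0 := by
  have h : (∑ i : Fin n, u (i, j))
      = ((Finset.univ.filter fun i : Fin n => u (i, j) = 1).card : ZMod 2) := by
    rw [Finset.card_eq_sum_ones, Nat.cast_sum, Finset.sum_filter]
    refine Finset.sum_congr rfl fun i _ => ?_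
    have : ∀ x : ZMod 2, x = if x = 1 then ((1:ℕ):ZMod 2) else 0 := by decide
    exact this _
  rw [h, ZMod.natCast_eq_zero_iff, even_iff_two_dvd]

lemma hx_col_sum (n : ℕ) {y : Fin n × Fin n → ZMod 2} (hy : y ∈ HX n) (j : Fin n) :
    ∑ i : Fin n, y (i, j) = 0 := by
  let φ : (Fin n × Fin n → ZMod 2) →ₗ[ZMod 2] ZMod 2 :=
    { toFun := fun u => ∑ i : Fin n, u (i, j)
      map_add' := fun a b => by simp [Finset.sum_add_distrib]
      map_smul' := fun c a => by simp [Finset.mul_sum] }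
  have hle : HX n ≤ LinearMap.ker φ := by
    rw [HX, Submodule.span_le]
    rintro w ⟨i, hi, rfl⟩
    simp [LinearMap.mem_ker, φ, Blk, Finset.sum_add_distrib]; decide
  exact hle hy
/-- The blockwise transversal controlled charge-conjugation gate `U`, defined
on basis vectors by negating `v(j)` exactly when the number of blocks `i` with
`u(i,j) = 1` is odd, implements the logical controlled charge-conjugation
`|α⟩_L |β⟩_L ↦ |α⟩_L |(1+α)·β⟩_L` on the code states of the `[[n²,1,n]]` Shor
code paired with any qutrit CSS code of length `n`, for `n` odd. -/
theorem logical_controlled_charge_conjugation (n : ℕ) (hn : Odd n)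
    (Hhat : Submodule (ZMod 3) (Fin n → ZMod 3)) (xhat : Fin n → ZMod 3)
    (U : (((Fin n × Fin n → ZMod 2) × (Fin n → ZMod 3)) → ℂ)
        →ₗ[ℂ] (((Fin n × Fin n → ZMod 2) × (Fin n → ZMod 3)) → ℂ))
    (hU : ∀ (u : Fin n × Fin n → ZMod 2) (v : Fin n → ZMod 3),
      U (Pi.single (u, v) 1)
        = Pi.single
            (u, fun j => if Even (Finset.univ.filter fun i : Fin n => u (i, j) = 1).card
              then v j else -v j) 1) :
    ∀ β : ZMod 3,
      U (logicalPair n Hhat xhat 0 β) = logicalPair n Hhat xhat 0 β ∧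
      U (logicalPair n Hhat xhat 1 β) = logicalPair n Hhat xhat 1 (2 * β) := by
  intro β
  have hone : ∀ j : Fin n, ∑ i : Fin n, allOnes n (i, j) = 1 := by
    intro j
    have h1 : ∀ i : Fin n, allOnes n (i, j) = 1 := by
      intro i
      simp [allOnes, Blk, Finset.sum_apply, Finset.sum_ite_eq]
    simp only [h1, Finset.sum_const, Finset.card_univ, Fintype.card_fin, nsmul_eq_mul, mul_one]
    obtain ⟨k, hk⟩ := hn
    subst hk
    push_cast
    have h2 : ((2 : ℕ) : ZMod 2) = 0 := by decide
    push_cast at h2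
    rw [h2]
    ring
  constructor
  · rw [logicalPair, map_sum]
    simp only [map_sum, hU, zero_smul, zero_add, logicalPair]
    refine Finset.sum_congr rfl fun y _ => Finset.sum_congr rfl fun z _ => ?_
    refine congrArg (fun p => Pi.single p (1 : ℂ)) (Prod.ext rfl ?_)
    funext j
    dsimp only
    rw [if_pos ((col_sum_card n _ j).2 (hx_col_sum n y.2 j))]
  · rw [logicalPair, map_sum]
    simp only [map_sum, hU, one_smul, logicalPair]
    refine Finset.sum_congr rfl fun y _ => ?_
    have hodd : ∀ j : Fin n,
        ¬ Even ((Finset.univ.filter fun i : Fin n =>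
          (allOnes n + (y : Fin n × Fin n → ZMod 2)) (i, j) = 1).card) := by
      intro j h
      rw [col_sum_card] at h
      rw [show (∑ i : Fin n, (allOnes n + (y : Fin n × Fin n → ZMod 2)) (i, j)) = 1 by
        simp only [Pi.add_apply, Finset.sum_add_distrib, hx_col_sum n y.2 j, hone j, add_zero]]
        at h
      exact one_ne_zero h
    refine Fintype.sum_equiv (Equiv.neg Hhat) _ _ fun z => ?_
    refine congrArg (fun p => Pi.single p (1 : ℂ)) (Prod.ext rfl ?_)
    funext j
    dsimp only
    rw [if_neg (hodd j)]
    show -((β • xhat + (z : Fin n → ZMod 3)) j)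
        = ((2 * β) • xhat + (((Equiv.neg Hhat) z : Hhat) : Fin n → ZMod 3)) j
    have hneg : ∀ a b : ZMod 3, -(a * b) = 2 * a * b := by decide
    simp only [Equiv.neg_apply, Pi.add_apply, Pi.smul_apply, smul_eq_mul, neg_add,
      Pi.neg_apply, hneg, Submodule.coe_neg]
end
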